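/- arXiv:0805.3541 — 2 statements merged into one kernel-verified Lean document; each statement's English description precedes it below -/
import Mathlib

section
/- For any i_p, i_p̄ ∈ I and j, j̄ ∉ I with I = {i_1 < ... < i_k} ⊂ [1,n], the identity ε_{j j̄} + ε_{i_p̄ i_p} − ε_{j i_p} − ε_{i_p̄ j̄} = 2 s_=(i_p, j, i_p̄, j̄) holds, where ε_{ab} = 0 if a ≤ k < b or b ≤ k < a, and ε_{ab} = sign(a−b) otherwise. -/
/-!
`ε_{ab}` differs from `sign (a - b)` by the coboundary `[k < b] - [k < a]`, and `sign (a - b)`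
differs from the sign of the difference of the cyclic distances of `a` and `b` from `i_p` by
`2 [b < i_p] - 2 [a < i_p]`. Coboundaries cancel in `ε_{jj̄} + ε_{īi} - ε_{ji} - ε_{īj̄}`, so the
left side equals the same alternating sum of signs after rotating the labels so that `i_p`
becomes `0`; `s_=` only depends on cyclic distances and is invariant under this rotation. With
`i_p` at `0` the identity is a check over the relative order of the three remaining positions.
-/

/-- The counterclockwise cyclic distance from `a` to `b` among the boundary points
`b_1, …, b_n` (labelled counterclockwise). -/
def cdist (n a b : ℕ) : ℕ := (b + n - a) % n

/-- `btw n a b c` means `a ≺ b ≺ c`: `b` lies strictly between `a` and `c`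
in the counterclockwise cyclic order on `b_1, …, b_n`. -/
def btw (n a b c : ℕ) : Prop := 0 < cdist n a b ∧ cdist n a b < cdist n a c

/-- `ord4 n a b c d` means `a ≺ b ≺ c ≺ d` in the counterclockwise cyclic order. -/
def ord4 (n a b c d : ℕ) : Prop :=
  0 < cdist n a b ∧ cdist n a b < cdist n a c ∧ cdist n a c < cdist n a d

open Classical in
/-- The function `s_=(i,j,i',j')` of the paper. -/
noncomputable def sEq (n i j i' j' : ℕ) : ℚ :=
  if ord4 n i i' j' j then 1
  else if ord4 n i' i j j' then -1
  else if (i = i' ∧ btw n i j' j) ∨ (j = j' ∧ btw n i i' j) then 1/2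
  else if (i = i' ∧ btw n i j j') ∨ (j = j' ∧ btw n i' i j) then -1/2
  else 0

open Classical in
/-- The function `s_×(i,j,i',j')` of the paper. -/
noncomputable def sCross (n i j i' j' : ℕ) : ℚ :=
  if ord4 n i' i j' j then 1
  else if ord4 n i i' j j' then -1
  else if (i = i' ∧ btw n i j' j) ∨ (j = j' ∧ btw n i' i j) then 1/2
  else if (i = i' ∧ btw n i j j') ∨ (j = j' ∧ btw n i i' j) then -1/2
  else 0

open Classical in
/-- `ε_{ab}`: zero if exactly one of `a, b` lies in `[1,k]`, and `sign(a−b)` otherwise. -/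
noncomputable def epsf (k a b : ℕ) : ℚ :=
  if (a ≤ k ∧ k < b) ∨ (b ≤ k ∧ k < a) then 0 else ((Int.sign ((a : ℤ) - (b : ℤ))) : ℚ)

lemma cdist_eq_ite {n a b : ℕ} (ha : a ≤ b + n) (hb : b < a + n) :
    cdist n a b = if a ≤ b then b - a else b + n - a := by
  split_ifs with h
  · rw [cdist, show b + n - a = b - a + n by omega, Nat.add_mod_right,
      Nat.mod_eq_of_lt (by omega)]
  · exact Nat.mod_eq_of_lt (by omega)

lemma cdist_self (n a : ℕ) : cdist n a a = 0 := by
  simp [cdist]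

lemma cdist_eq_zero_iff {n a b : ℕ} (ha : a < b + n) (hb : b < a + n) :
    cdist n a b = 0 ↔ a = b := by
  rw [cdist_eq_ite ha.le hb]
  split_ifs <;> omega

lemma cdist_lt {n : ℕ} (hn : 0 < n) (a b : ℕ) : cdist n a b < n :=
  Nat.mod_lt _ hn

lemma cdist_cast {n a b : ℕ} (h : a ≤ b + n) : (cdist n a b : ℤ) = ((b : ℤ) - a) % n := by
  rw [cdist, Int.natCast_mod, Nat.cast_sub h]
  push_cast
  rw [show (b : ℤ) + n - a = b - a + n by ring, Int.add_emod_right]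

lemma cdist_cdist {n a b c : ℕ} (hn : 0 < n) (ha : a ≤ n) (hc : c ≤ n) :
    cdist n (cdist n c a) (cdist n c b) = cdist n a b := by
  have hca : cdist n c a < n := cdist_lt hn c a
  zify
  rw [cdist_cast (by omega), cdist_cast (by omega), cdist_cast (by omega), cdist_cast (by omega),
    ← Int.sub_emod]
  ring_nf

lemma cdist_cdist_inj {n a b c : ℕ} (hc : c ≤ n) (ha : a ∈ Finset.Icc 1 n)
    (hb : b ∈ Finset.Icc 1 n) : cdist n c a = cdist n c b ↔ a = b := by
  simp only [Finset.mem_Icc] at ha hb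
  have hn : 0 < n := by omega
  have hca := cdist_lt hn c a
  have hcb := cdist_lt hn c b
  rw [← cdist_eq_zero_iff (n := n) (a := a) (b := b) (by omega) (by omega),
    ← cdist_cdist hn ha.2 hc, cdist_eq_zero_iff (by omega) (by omega)]

lemma sEq_cdist {n c i j i' j' : ℕ} (hc : c ≤ n) (hi : i ∈ Finset.Icc 1 n)
    (hj : j ∈ Finset.Icc 1 n) (hi' : i' ∈ Finset.Icc 1 n) (hj' : j' ∈ Finset.Icc 1 n) :
    sEq n (cdist n c i) (cdist n c j) (cdist n c i') (cdist n c j') = sEq n i j i' j' := by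
  have hn : 0 < n := by simp only [Finset.mem_Icc] at hi; omega
  have hle : ∀ {a}, a ∈ Finset.Icc 1 n → a ≤ n := fun ha => (Finset.mem_Icc.1 ha).2
  simp only [sEq, ord4, _root_.btw, cdist_cdist hn (hle hi) hc, cdist_cdist hn (hle hi') hc,
    cdist_cdist_inj hc hi hi', cdist_cdist_inj hc hj hj']
  congr -- only the classical decidability instances still differ

lemma sign_sub_eq_ite (a b : ℕ) :
    (Int.sign ((a : ℤ) - b) : ℚ) = if b < a then 1 else if a < b then -1 else 0 := by
  split_ifs
  · rw [Int.sign_eq_one_of_pos (by omega)]; norm_num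
  · rw [Int.sign_eq_neg_one_of_neg (by omega)]; norm_num
  · rw [show (a : ℤ) - b = 0 by omega]; norm_num

lemma epsf_eq_sign_add (k a b : ℕ) :
    epsf k a b = (Int.sign ((a : ℤ) - b) : ℚ) +
      ((if k < b then 1 else 0) - (if k < a then 1 else 0)) := by
  rw [epsf, sign_sub_eq_ite]
  split_ifs <;> norm_num <;> omega

lemma sign_sub_eq_sign_cdist_sub_add {n c a b : ℕ} (hc : c ∈ Finset.Icc 1 n)
    (ha : a ∈ Finset.Icc 1 n) (hb : b ∈ Finset.Icc 1 n) :
    (Int.sign ((a : ℤ) - b) : ℚ) = (Int.sign ((cdist n c a : ℤ) - cdist n c b) : ℚ) +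
      ((if b < c then 2 else 0) - (if a < c then 2 else 0)) := by
  simp only [Finset.mem_Icc] at hc ha hb
  simp (disch := omega) only [cdist_eq_ite, sign_sub_eq_ite]
  split_ifs <;> norm_num <;> omega

lemma ord4_zero_iff {n b c d : ℕ} (hb : b < n) (hc : c < n) (hd : d < n) :
    ord4 n 0 b c d ↔ 0 < b ∧ b < c ∧ c < d := by
  simp (disch := omega) only [ord4, cdist_eq_ite]
  split_ifs <;> omega

lemma btw_zero_iff {n b c : ℕ} (hb : b < n) (hc : c < n) :
    _root_.btw n 0 b c ↔ 0 < b ∧ b < c := by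
  simp (disch := omega) only [_root_.btw, cdist_eq_ite]
  split_ifs <;> omega

lemma ord4_zero_iff_of_left {n a c d : ℕ} (ha : a < n) (hc : c < n) (hd : d < n) :
    ord4 n a 0 c d ↔ 0 < c ∧ c < d ∧ d < a := by
  simp (disch := omega) only [ord4, cdist_eq_ite]
  split_ifs <;> omega

lemma btw_zero_iff_of_left {n a c : ℕ} (ha : a < n) (hc : c < n) :
    _root_.btw n a 0 c ↔ 0 < c ∧ c < a := by
  simp (disch := omega) only [_root_.btw, cdist_eq_ite]
  split_ifs <;> omega

lemma sign_sum_eq_two_mul_sEq_zero {n x y z : ℕ} (hx : x < n) (hy : y < n) (hz : z < n)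
    (hx₀ : x ≠ 0) (hz₀ : z ≠ 0) (hyx : y ≠ x) (hyz : y ≠ z) :
    (Int.sign ((x : ℤ) - z) : ℚ) + (Int.sign ((y : ℤ) - (0 : ℕ)) : ℚ) -
        (Int.sign ((x : ℤ) - (0 : ℕ)) : ℚ) - (Int.sign ((y : ℤ) - z) : ℚ) =
      2 * sEq n 0 x y z := by
  simp only [sEq, ord4_zero_iff hy hz hx, ord4_zero_iff_of_left hy hx hz, btw_zero_iff hz hx,
    btw_zero_iff hy hx, btw_zero_iff hx hz, btw_zero_iff_of_left hy hx, sign_sub_eq_ite]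
  rcases Nat.eq_zero_or_pos y with hy₀ | hy₀ <;>
    rcases lt_trichotomy x z with hxz | hxz | hxz <;>
    rcases hyx.lt_or_gt with hyx | hyx <;>
    rcases hyz.lt_or_gt with hyz | hyz <;>
    first
    | omega
    | simp (disch := omega) only [if_pos, if_neg]; norm_num

theorem eps_eq_two_sEq_general (n k : ℕ)
    (I : Finset ℕ) (hI : I ⊆ Finset.Icc 1 n)
    (ip ipbar : ℕ) (hip : ip ∈ I) (hipbar : ipbar ∈ I)
    (j jbar : ℕ) (hj : j ∈ Finset.Icc 1 n) (hjbar : jbar ∈ Finset.Icc 1 n)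
    (hjI : j ∉ I) (hjbarI : jbar ∉ I) :
    epsf k j jbar + epsf k ipbar ip - epsf k j ip - epsf k ipbar jbar =
      2 * sEq n ip j ipbar jbar := by
  have hipn : ip ≤ n := (Finset.mem_Icc.1 (hI hip)).2
  have hn : 0 < n := by rw [Finset.mem_Icc] at hj; omega
  have hsep : ∀ {a b}, a ∈ I → b ∈ Finset.Icc 1 n → b ∉ I → cdist n ip a ≠ cdist n ip b :=
    fun haI hb hbI h => hbI ((cdist_cdist_inj hipn (hI haI) hb).1 h ▸ haI)
  have hsep₀ : ∀ {b}, b ∈ Finset.Icc 1 n → b ∉ I → cdist n ip b ≠ 0 := fun hb hbI h =>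
    hsep hip hb hbI ((cdist_self n ip).trans h.symm)
  calc _ = (Int.sign ((j : ℤ) - jbar) : ℚ) + (Int.sign ((ipbar : ℤ) - ip) : ℚ)
        - (Int.sign ((j : ℤ) - ip) : ℚ) - (Int.sign ((ipbar : ℤ) - jbar) : ℚ) := by
        simp only [epsf_eq_sign_add]; ring
    _ = 2 * sEq n (cdist n ip ip) (cdist n ip j) (cdist n ip ipbar) (cdist n ip jbar) := by
        rw [sign_sub_eq_sign_cdist_sub_add (hI hip) hj hjbar,
          sign_sub_eq_sign_cdist_sub_add (hI hip) (hI hipbar) (hI hip),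
          sign_sub_eq_sign_cdist_sub_add (hI hip) hj (hI hip),
          sign_sub_eq_sign_cdist_sub_add (hI hip) (hI hipbar) hjbar, cdist_self,
          ← sign_sum_eq_two_mul_sEq_zero (cdist_lt hn _ _) (cdist_lt hn _ _) (cdist_lt hn _ _)
            (hsep₀ hj hjI) (hsep₀ hjbar hjbarI) (hsep hipbar hj hjI) (hsep hipbar hjbar hjbarI)]
        ring
    _ = 2 * sEq n ip j ipbar jbar := by rw [sEq_cdist hipn (hI hip) hj (hI hipbar) hjbar]

/-- For any sources `i_p, i_p̄ ∈ I` and any `j, j̄ ∉ I`,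
`ε_{j j̄} + ε_{i_p̄ i_p} − ε_{j i_p} − ε_{i_p̄ j̄} = 2 s_=(i_p, j, i_p̄, j̄)`. -/
theorem eps_eq_two_sEq (n k : ℕ) (hk : k ≤ n)
    (I : Finset ℕ) (hI : I ⊆ Finset.Icc 1 n) (hcard : I.card = k)
    (ip ipbar : ℕ) (hip : ip ∈ I) (hipbar : ipbar ∈ I)
    (j jbar : ℕ) (hj : j ∈ Finset.Icc 1 n) (hjbar : jbar ∈ Finset.Icc 1 n)
    (hjI : j ∉ I) (hjbarI : jbar ∉ I) :
    epsf k j jbar + epsf k ipbar ip - epsf k j ip - epsf k ipbar jbar =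
      2 * sEq n ip j ipbar jbar :=
  eps_eq_two_sEq_general n k I hI ip ipbar hip hipbar j jbar hj hjbar hjI hjbarI
end

section
/- The expression ε^1(i_p, j, j̄, i_p̄) := ε_{j j̄} + ε_{i_p̄ i_p} − ε_{j i_p} − ε_{i_p̄ j̄} depends only on the cyclic order of the four points i_p, j, j̄, i_p̄ (equivalently, it is invariant under cyclic shifts of the ambient labels preserving the cyclic configuration), given i_p, i_p̄ ∈ I ⊂ [1,n] with |I| = k and j, j̄ ∉ I. -/
/-- `ε¹(i_p, j, j̄, i_p̄) = ε_{j j̄} + ε_{i_p̄ i_p} − ε_{j i_p} − ε_{i_p̄ j̄}`,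
for a quadruple `Q = (i_p, j, j̄, i_p̄)` encoded as `Q 0 = i_p`, `Q 1 = j`,
`Q 2 = j̄`, `Q 3 = i_p̄`. -/
noncomputable def epsOne (k : ℕ) (Q : Fin 4 → ℕ) : ℚ :=
  epsf k (Q 1) (Q 2) + epsf k (Q 3) (Q 0) - epsf k (Q 1) (Q 0) - epsf k (Q 3) (Q 2)

def precFrom (n s x y : ℕ) : ℚ := if cdist n s x < cdist n s y then 1 else 0

def quadSum (f : ℕ → ℕ → ℚ) (Q : Fin 4 → ℕ) : ℚ :=
  f (Q 1) (Q 2) + f (Q 3) (Q 0) - f (Q 1) (Q 0) - f (Q 3) (Q 2)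

lemma cdist_eq_ite_s7 {n s y : ℕ} (hs : 1 ≤ s) (hsn : s ≤ n + 1) (hy : y ∈ Finset.Icc 1 n) :
    cdist n s y = if s ≤ y then y - s else y + n - s := by
  rw [Finset.mem_Icc] at hy
  unfold cdist
  split
  · rw [show y + n - s = (y - s) + 1 * n by omega, Nat.add_mul_mod_self_right,
      Nat.mod_eq_of_lt (by omega)]
  · rw [Nat.mod_eq_of_lt (by omega)]

lemma cdist_lt_cdist_iff {n a x y : ℕ} (ha : a ∈ Finset.Icc 1 n) (hx : x ∈ Finset.Icc 1 n)
    (hy : y ∈ Finset.Icc 1 n) :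
    cdist n a x < cdist n a y ↔ btw n a x y ∨ (x = a ∧ y ≠ a) := by
  have ha' := Finset.mem_Icc.1 ha
  unfold _root_.btw
  rw [cdist_eq_ite_s7 ha'.1 (by omega) hx, cdist_eq_ite_s7 ha'.1 (by omega) hy]
  simp only [Finset.mem_Icc] at hx hy
  split_ifs <;> omega

/-- Moving the starting point from `a` to `s` moves the points of the arc `[s, a)` from the
front to the back of the order. -/
lemma precFrom_sub_precFrom {n s a x y : ℕ} (hs : 1 ≤ s) (hsn : s ≤ n + 1)
    (ha : a ∈ Finset.Icc 1 n) (hx : x ∈ Finset.Icc 1 n) (hy : y ∈ Finset.Icc 1 n) :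
    precFrom n s x y - precFrom n a x y = precFrom n s x a - precFrom n s y a := by
  have ha' := Finset.mem_Icc.1 ha
  unfold precFrom
  rw [cdist_eq_ite_s7 hs hsn hx, cdist_eq_ite_s7 hs hsn hy, cdist_eq_ite_s7 hs hsn ha,
    cdist_eq_ite_s7 ha'.1 (by omega) hx, cdist_eq_ite_s7 ha'.1 (by omega) hy]
  simp only [Finset.mem_Icc] at hx hy
  split_ifs <;> (try norm_num) <;> omega

lemma epsf_eq_precFrom_sub_precFrom {n k a b : ℕ} (hk : k ≤ n)
    (ha : a ∈ Finset.Icc 1 n) (hb : b ∈ Finset.Icc 1 n) :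
    epsf k a b = precFrom n 1 b a - precFrom n (k + 1) a b := by
  unfold epsf precFrom
  rw [cdist_eq_ite_s7 le_rfl (by omega) ha, cdist_eq_ite_s7 le_rfl (by omega) hb,
    cdist_eq_ite_s7 (by omega) (by omega) ha, cdist_eq_ite_s7 (by omega) (by omega) hb]
  simp only [Finset.mem_Icc] at ha hb
  rcases lt_trichotomy a b with h | rfl | h
  · rw [Int.sign_eq_neg_one_iff_neg.2 (by omega)]
    split_ifs <;> (try norm_num) <;> omega
  · simp
  · rw [Int.sign_eq_one_iff_pos.2 (by omega)]
    split_ifs <;> (try norm_num) <;> omega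

lemma quadSum_sub_quadSum (f g : ℕ → ℕ → ℚ) (Q : Fin 4 → ℕ) :
    quadSum f Q - quadSum g Q = quadSum (fun x y => f x y - g x y) Q := by
  unfold quadSum; ring

lemma quadSum_eq_of_sub_eq_sub {f g : ℕ → ℕ → ℚ} (h : ℕ → ℚ) {Q : Fin 4 → ℕ}
    (hfg : ∀ i j, f (Q i) (Q j) - g (Q i) (Q j) = h (Q i) - h (Q j)) :
    quadSum f Q = quadSum g Q := by
  unfold quadSum
  linarith [hfg 1 2, hfg 3 0, hfg 1 0, hfg 3 2]

lemma quadSum_precFrom_eq {n s : ℕ} (hs : 1 ≤ s) (hsn : s ≤ n + 1) {Q : Fin 4 → ℕ}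
    (hQ : ∀ i, Q i ∈ Finset.Icc 1 n) :
    quadSum (precFrom n s) Q = quadSum (precFrom n (Q 0)) Q :=
  quadSum_eq_of_sub_eq_sub (fun x => precFrom n s x (Q 0)) fun i j =>
    precFrom_sub_precFrom hs hsn (hQ 0) (hQ i) (hQ j)

lemma quadSum_flip_precFrom_eq {n s : ℕ} (hs : 1 ≤ s) (hsn : s ≤ n + 1) {Q : Fin 4 → ℕ}
    (hQ : ∀ i, Q i ∈ Finset.Icc 1 n) :
    quadSum (fun x y => precFrom n s y x) Q = quadSum (fun x y => precFrom n (Q 0) y x) Q :=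
  quadSum_eq_of_sub_eq_sub (fun x => -precFrom n s x (Q 0)) fun i j => by
    linarith [precFrom_sub_precFrom hs hsn (hQ 0) (hQ j) (hQ i)]

lemma epsOne_eq_quadSum_precFrom {n k : ℕ} (hk : k ≤ n) {Q : Fin 4 → ℕ}
    (hQ : ∀ i, Q i ∈ Finset.Icc 1 n) :
    epsOne k Q = quadSum (fun x y => precFrom n (Q 0) y x) Q - quadSum (precFrom n (Q 0)) Q := by
  have hsplit : epsOne k Q =
      quadSum (fun x y => precFrom n 1 y x) Q - quadSum (precFrom n (k + 1)) Q := by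
    rw [quadSum_sub_quadSum]
    unfold epsOne quadSum
    simp only [epsf_eq_precFrom_sub_precFrom hk (hQ _) (hQ _)]
  rw [hsplit, quadSum_flip_precFrom_eq le_rfl (by omega) hQ,
    quadSum_precFrom_eq (by omega) (by omega) hQ]

lemma precFrom_eq_of_cyclic_pattern {n : ℕ} {Q Q' : Fin 4 → ℕ}
    (hQ : ∀ i, Q i ∈ Finset.Icc 1 n) (hQ' : ∀ i, Q' i ∈ Finset.Icc 1 n)
    (heq : ∀ x y : Fin 4, Q x = Q y ↔ Q' x = Q' y)
    (hbtw : ∀ x y z : Fin 4, btw n (Q x) (Q y) (Q z) ↔ btw n (Q' x) (Q' y) (Q' z))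
    (i j : Fin 4) :
    precFrom n (Q 0) (Q i) (Q j) = precFrom n (Q' 0) (Q' i) (Q' j) := by
  have hlt : cdist n (Q 0) (Q i) < cdist n (Q 0) (Q j) ↔
      cdist n (Q' 0) (Q' i) < cdist n (Q' 0) (Q' j) := by
    simp only [cdist_lt_cdist_iff (hQ 0) (hQ i) (hQ j),
      cdist_lt_cdist_iff (hQ' 0) (hQ' i) (hQ' j), hbtw, ne_eq, heq]
  exact if_congr hlt rfl rfl

theorem epsOne_depends_only_on_cyclic_order_general (n k : ℕ) (hk : k ≤ n)
    (Q Q' : Fin 4 → ℕ)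
    (hQrange : ∀ x, Q x ∈ Finset.Icc 1 n) (hQ'range : ∀ x, Q' x ∈ Finset.Icc 1 n)
    (heq : ∀ x y : Fin 4, Q x = Q y ↔ Q' x = Q' y)
    (hbtw : ∀ x y z : Fin 4, btw n (Q x) (Q y) (Q z) ↔ btw n (Q' x) (Q' y) (Q' z)) :
    epsOne k Q = epsOne k Q' := by
  rw [epsOne_eq_quadSum_precFrom hk hQrange, epsOne_eq_quadSum_precFrom hk hQ'range]
  simp only [quadSum, precFrom_eq_of_cyclic_pattern hQrange hQ'range heq hbtw]

/-- `ε¹(i_p, j, j̄, i_p̄)` depends only on the cyclic order of the four points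
`i_p, j, j̄, i_p̄` (including coincidences), not on the points themselves: if two
quadruples (sources in `I`, sinks outside `I`) induce the same pattern of coincidences
and the same cyclic betweenness relations, then `ε¹` takes the same value on both. -/
theorem epsOne_depends_only_on_cyclic_order (n k : ℕ) (hk : k ≤ n)
    (I : Finset ℕ) (hI : I ⊆ Finset.Icc 1 n) (hcard : I.card = k)
    (Q Q' : Fin 4 → ℕ)
    (hQrange : ∀ x, Q x ∈ Finset.Icc 1 n) (hQ'range : ∀ x, Q' x ∈ Finset.Icc 1 n)
    (hQsrc : Q 0 ∈ I ∧ Q 3 ∈ I) (hQsnk : Q 1 ∉ I ∧ Q 2 ∉ I)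
    (hQ'src : Q' 0 ∈ I ∧ Q' 3 ∈ I) (hQ'snk : Q' 1 ∉ I ∧ Q' 2 ∉ I)
    (heq : ∀ x y : Fin 4, Q x = Q y ↔ Q' x = Q' y)
    (hbtw : ∀ x y z : Fin 4, btw n (Q x) (Q y) (Q z) ↔ btw n (Q' x) (Q' y) (Q' z)) :
    epsOne k Q = epsOne k Q' :=
  epsOne_depends_only_on_cyclic_order_general n k hk Q Q' hQrange hQ'range heq hbtw
end
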